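/- Let X be a binomial random variable with parameters n and p, where n p ≥ 2 and n(1−p) ≥ 2. Then P(X > n p) > 0.25587 > 1/4. -/

import Mathlib

/-!
Write `T n k x` for `(binomialTail ℝ n k).eval x`, the probability that a binomial variable
with parameters `n`, `x` is at least `k`. With `m = ⌊n p⌋₊` we have `2 ≤ m < n` and
`P(X > n p) = T n (m + 1) p`.

The derivative of `T n (m + 1)` is `n` times a Bernstein polynomial, so
`T n (m + 1) p ≥ T n (m + 1) (m / n)`, and the latter is nondecreasing in `n ≥ m + 1`: the
function `G x = T n (m + 1) x + (m - n x) C(n, m) x^m (1 - x)^(n - m)` equals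
`T n (m + 1) (m / n)` at `m / n`, equals `T (n + 1) (m + 1) (m / (n + 1))` at `m / (n + 1)` by
Pascal's rule, and in between has derivative
`C(n, m) x^(m - 1) (1 - x)^(n - m - 1) (n x - m) ((n + 1) x - m) ≤ 0`. Hence
`P(X > n p) ≥ T (m + 1) (m + 1) (m / (m + 1)) = (m / (m + 1))^(m + 1)`, which exceeds `0.25587`
for `m ≥ 2` (for `m ≥ 4` because `(1 + 1 / m)^(m + 1) ≤ e^(5/4)`).
-/

open Finset Polynomial Real

section Bernstein

variable {R : Type*} [CommRing R]

theorem bernsteinPolynomial_eval_nonneg [PartialOrder R] [IsOrderedRing R] (n ν : ℕ) {x : R}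
    (hx0 : 0 ≤ x) (hx1 : x ≤ 1) : 0 ≤ (bernsteinPolynomial R n ν).eval x := by
  simp only [bernsteinPolynomial, eval_mul, eval_natCast, eval_pow, eval_sub, eval_one, eval_X]
  have : 0 ≤ 1 - x := sub_nonneg.2 hx1
  positivity

theorem bernsteinPolynomial_succ_succ (n ν : ℕ) :
    bernsteinPolynomial R (n + 1) (ν + 1) =
      X * bernsteinPolynomial R n ν + (1 - X) * bernsteinPolynomial R n (ν + 1) := by
  rcases lt_or_ge ν n with h | h
  · obtain ⟨r, rfl⟩ := Nat.exists_eq_add_of_lt h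
    simp only [bernsteinPolynomial, Nat.choose_succ_succ', Nat.cast_add]
    rw [show ν + r + 1 + 1 - (ν + 1) = r + 1 by omega, show ν + r + 1 - ν = r + 1 by omega,
      show ν + r + 1 - (ν + 1) = r by omega]
    ring
  · rw [bernsteinPolynomial.eq_zero_of_lt R (by omega : n < ν + 1), mul_zero, add_zero]
    rcases h.eq_or_lt with rfl | h
    · simp [bernsteinPolynomial, pow_succ']
    · simp [bernsteinPolynomial, Nat.choose_eq_zero_of_lt, h]

end Bernstein

section BinomialTail

variable (R : Type*) [CommRing R]

noncomputable def binomialTail (n k : ℕ) : R[X] :=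
  ∑ ν ∈ Icc k n, bernsteinPolynomial R n ν

theorem eval_binomialTail (n k : ℕ) (x : R) :
    (binomialTail R n k).eval x =
      ∑ ν ∈ Icc k n, (n.choose ν : R) * x ^ ν * (1 - x) ^ (n - ν) := by
  simp [binomialTail, bernsteinPolynomial, eval_finsetSum]

theorem binomialTail_self (n : ℕ) : binomialTail R n n = X ^ n := by
  simp [binomialTail, bernsteinPolynomial]

variable {R}

theorem binomialTail_eq_bernsteinPolynomial_add {n k : ℕ} (h : k ≤ n) :
    binomialTail R n k = bernsteinPolynomial R n k + binomialTail R n (k + 1) := by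
  rw [binomialTail, binomialTail, Icc_add_one_left_eq_Ioc, add_sum_Ioc_eq_sum_Icc h]

theorem binomialTail_succ_succ {n k : ℕ} (hk : k ≤ n) :
    binomialTail R (n + 1) (k + 1) =
      binomialTail R n (k + 1) + X * bernsteinPolynomial R n k := by
  have hshift : ∀ g : ℕ → R[X],
      ∑ ν ∈ Icc k n, g (ν + 1) = ∑ ν ∈ Icc (k + 1) (n + 1), g ν := by
    intro g
    rw [← map_add_right_Icc, sum_map]
    rfl
  have htop : bernsteinPolynomial R n (n + 1) = 0 :=
    bernsteinPolynomial.eq_zero_of_lt R (by omega)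
  have hpascal : binomialTail R (n + 1) (k + 1) =
      X * binomialTail R n k + (1 - X) * binomialTail R n (k + 1) := by
    simp only [binomialTail, ← hshift, bernsteinPolynomial_succ_succ, sum_add_distrib, mul_sum]
    rw [hshift fun ν => (1 - X) * bernsteinPolynomial R n ν, sum_Icc_succ_top (by omega), htop,
      mul_zero, add_zero]
  rw [hpascal, binomialTail_eq_bernsteinPolynomial_add hk]
  ring

theorem derivative_binomialTail_succ {n k : ℕ} (hk : k < n) :
    derivative (binomialTail R n (k + 1)) = n * bernsteinPolynomial R (n - 1) k := by
  -- `bernsteinPolynomial.derivative_succ` makes the sum telescope.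
  set f : ℕ → R[X] := fun i => -(n * bernsteinPolynomial R (n - 1) (i - 1))
  have hterm : ∀ i ∈ Icc (k + 1) n,
      derivative (bernsteinPolynomial R n i) = f (i + 1) - f i := by
    intro i hi
    obtain ⟨j, rfl⟩ : ∃ j, i = j + 1 := ⟨i - 1, by grind⟩
    simp only [f, bernsteinPolynomial.derivative_succ, Nat.add_sub_cancel]
    ring
  have htop : bernsteinPolynomial R (n - 1) n = 0 :=
    bernsteinPolynomial.eq_zero_of_lt R (by omega)
  rw [binomialTail, derivative_sum, sum_congr rfl hterm, sum_Icc_sub (by omega)]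
  simp [f, htop]

theorem derivative_binomialTail_add_mul_bernsteinPolynomial {m n : ℕ} (hm : 1 ≤ m)
    (hmn : m < n) :
    derivative (binomialTail R n (m + 1) +
        ((m : R[X]) - (n : R[X]) * X) * bernsteinPolynomial R n m) =
      (n.choose m : R[X]) * X ^ (m - 1) * (1 - X) ^ (n - m - 1) *
        (((n : R[X]) * X - (m : R[X])) * (((n : R[X]) + 1) * X - (m : R[X]))) := by
  rw [derivative_add, derivative_binomialTail_succ hmn, derivative_mul]
  obtain ⟨j, rfl⟩ := Nat.exists_eq_add_of_le' hm
  obtain ⟨r, rfl⟩ := Nat.exists_eq_add_of_lt hmn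
  rw [bernsteinPolynomial.derivative_succ]
  have h1 := congrArg (Nat.cast : ℕ → R[X]) (Nat.add_one_mul_choose_eq (j + 1 + r) j)
  have h2 := congrArg (Nat.cast : ℕ → R[X]) (Nat.choose_mul_succ_eq (j + 1 + r) (j + 1))
  simp only [bernsteinPolynomial, show j + 1 + r + 1 - 1 = j + 1 + r by omega,
    show j + 1 + r - j = r + 1 by omega, show j + 1 + r - (j + 1) = r by omega,
    show j + 1 + r + 1 - (j + 1) = r + 1 by omega, show j + 1 - 1 = j by omega] at h2 ⊢
  simp only [derivative_sub, derivative_natCast, derivative_mul, derivative_X]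
  push_cast at h1 h2 ⊢
  linear_combination (X ^ (j + 1) * (1 - X) ^ r * (1 - (j + 1 - (j + r + 2) * X))) * h2
    + ((j + 1 - (j + r + 2) * X) * X ^ j * (1 - X) ^ (r + 1)) * h1

end BinomialTail

theorem monotoneOn_eval_binomialTail {n k : ℕ} (hk : k < n) :
    MonotoneOn (fun x => (binomialTail ℝ n (k + 1)).eval x) (Set.Icc 0 1) := by
  refine monotoneOn_of_deriv_nonneg (convex_Icc 0 1) (Polynomial.continuousOn _)
    (Polynomial.differentiableOn _) fun x hx => ?_
  rw [interior_Icc] at hx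
  rw [Polynomial.deriv, derivative_binomialTail_succ hk, eval_mul, eval_natCast]
  exact mul_nonneg (Nat.cast_nonneg n) (bernsteinPolynomial_eval_nonneg _ _ hx.1.le hx.2.le)

theorem eval_binomialTail_div_le_succ {m n : ℕ} (hm : 1 ≤ m) (hmn : m < n) :
    (binomialTail ℝ n (m + 1)).eval ((m : ℝ) / n) ≤
      (binomialTail ℝ (n + 1) (m + 1)).eval ((m : ℝ) / (n + 1)) := by
  set G : ℝ[X] :=
    binomialTail ℝ n (m + 1) + ((m : ℝ[X]) - (n : ℝ[X]) * X) * bernsteinPolynomial ℝ n m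
    with hG
  have hn : (0 : ℝ) < n := by exact_mod_cast Nat.zero_lt_of_lt hmn
  have hmn' : (m : ℝ) < n := by exact_mod_cast hmn
  have hab : (m : ℝ) / (n + 1) ≤ m / n :=
    div_le_div_of_nonneg_left (Nat.cast_nonneg m) hn (by linarith)
  have hanti : AntitoneOn (fun x => G.eval x) (Set.Icc ((m : ℝ) / (n + 1)) (m / n)) := by
    refine antitoneOn_of_deriv_nonpos (convex_Icc _ _) G.continuousOn G.differentiableOn ?_
    intro x hx
    rw [interior_Icc, Set.mem_Ioo, div_lt_iff₀ (by positivity), lt_div_iff₀ hn] at hx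
    have hx0 : 0 < x := by nlinarith
    have hx1 : 0 < 1 - x := by nlinarith
    rw [Polynomial.deriv, hG, derivative_binomialTail_add_mul_bernsteinPolynomial hm hmn]
    simp only [eval_mul, eval_pow, eval_sub, eval_natCast, eval_X, eval_one, eval_add]
    exact mul_nonpos_of_nonneg_of_nonpos (by positivity)
      (mul_nonpos_of_nonpos_of_nonneg (by linarith) (by linarith))
  have hleft : G.eval ((m : ℝ) / n) = (binomialTail ℝ n (m + 1)).eval ((m : ℝ) / n) := by
    simp [G, mul_div_cancel₀ _ hn.ne']
  have hright : G.eval ((m : ℝ) / (n + 1)) =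
      (binomialTail ℝ (n + 1) (m + 1)).eval ((m : ℝ) / (n + 1)) := by
    rw [binomialTail_succ_succ hmn.le]
    simp only [G, eval_add, eval_mul, eval_sub, eval_natCast, eval_X]
    field_simp
    ring
  calc (binomialTail ℝ n (m + 1)).eval ((m : ℝ) / n) = G.eval ((m : ℝ) / n) := hleft.symm
    _ ≤ G.eval ((m : ℝ) / (n + 1)) := hanti ⟨le_rfl, hab⟩ ⟨hab, le_rfl⟩ hab
    _ = (binomialTail ℝ (n + 1) (m + 1)).eval ((m : ℝ) / (n + 1)) := hright

theorem monotoneOn_eval_binomialTail_div {m : ℕ} (hm : 1 ≤ m) :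
    MonotoneOn (fun n : ℕ => (binomialTail ℝ n (m + 1)).eval ((m : ℝ) / n))
      (Set.Ici (m + 1)) :=
  monotoneOn_nat_Ici_of_le_succ fun n hn => by
    simpa using eval_binomialTail_div_le_succ hm (Nat.lt_of_succ_le hn)

theorem exp_five_quarters_lt : exp (5 / 4) < 1 / 0.25587 := by
  have h14 : exp (1 / 4) < 1 / (1 - 1 / 4) :=
    exp_bound_div_one_sub_of_interval' (by norm_num) (by norm_num)
  calc exp (5 / 4) = exp 1 * exp (1 / 4) := by rw [← exp_add]; norm_num
    _ < 2.7182818286 * (1 / (1 - 1 / 4)) :=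
        mul_lt_mul'' exp_one_lt_d9 h14 (exp_pos 1).le (exp_pos _).le
    _ < 1 / 0.25587 := by norm_num

theorem lt_div_add_one_pow_add_one {m : ℕ} (hm : 2 ≤ m) :
    (0.25587 : ℝ) < ((m : ℝ) / (m + 1)) ^ (m + 1) := by
  rcases le_or_gt m 3 with h | h
  · interval_cases m <;> norm_num
  have hm0 : (0 : ℝ) < m := by positivity
  have hm4 : (4 : ℝ) ≤ m := by exact_mod_cast h
  have hinv : (((m : ℝ) + 1) / m) ^ (m + 1) < 1 / 0.25587 :=
    calc (((m : ℝ) + 1) / m) ^ (m + 1) = (1 / m + 1) ^ (m + 1) := by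
          rw [add_div, div_self hm0.ne', add_comm]
      _ ≤ exp (1 / m) ^ (m + 1) := pow_le_pow_left₀ (by positivity) (add_one_le_exp _) _
      _ = exp ((m + 1) / m) := by rw [← exp_nat_mul]; push_cast; ring_nf
      _ ≤ exp (5 / 4) := exp_le_exp.2 (by rw [div_le_div_iff₀ hm0 (by norm_num)]; linarith)
      _ < 1 / 0.25587 := exp_five_quarters_lt
  rw [← inv_div, inv_pow]
  exact lt_inv_of_lt_inv₀ (by positivity) (by simpa using hinv)

theorem filter_lt_range_eq_Icc {α : Type*} [Semiring α] [LinearOrder α] [FloorSemiring α]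
    {a : α} (ha : 0 ≤ a) (n : ℕ) :
    (range (n + 1)).filter (fun k : ℕ => a < k) = Icc (⌊a⌋₊ + 1) n := by
  ext k
  simp only [mem_filter, mem_range, mem_Icc, ← Nat.floor_lt ha]
  omega

theorem binomial_prob_gt_mean_main_case_general
    (n : ℕ) (p : ℝ) (hp1 : p < 1)
    (h1 : 2 ≤ (n : ℝ) * p) :
    (0.25587 : ℝ) <
      (∑ k ∈ (Finset.range (n + 1)).filter (fun k : ℕ => (n : ℝ) * p < (k : ℝ)),
        (n.choose k : ℝ) * p ^ k * (1 - p) ^ (n - k)) ∧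
    (1 : ℝ) / 4 < (0.25587 : ℝ) := by
  refine ⟨?_, by norm_num⟩
  have hnp : 0 ≤ (n : ℝ) * p := by linarith
  set m := ⌊(n : ℝ) * p⌋₊
  have hm : 2 ≤ m := Nat.le_floor (by exact_mod_cast h1)
  have hn : (0 : ℝ) < n := by nlinarith [Nat.cast_nonneg (α := ℝ) n]
  have hmn : m < n := by
    have : (m : ℝ) < n := (Nat.floor_le hnp).trans_lt (by nlinarith)
    exact_mod_cast this
  have hmp : (m : ℝ) / n ≤ p := by
    rw [div_le_iff₀ hn]
    linarith [Nat.floor_le hnp]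
  have hdiv_mem : (m : ℝ) / n ∈ Set.Icc (0 : ℝ) 1 :=
    ⟨by positivity, (div_le_one hn).2 (by exact_mod_cast hmn.le)⟩
  rw [filter_lt_range_eq_Icc hnp, ← eval_binomialTail]
  calc (0.25587 : ℝ) < ((m : ℝ) / (m + 1)) ^ (m + 1) := lt_div_add_one_pow_add_one hm
    _ = (binomialTail ℝ (m + 1) (m + 1)).eval ((m : ℝ) / ↑(m + 1)) := by
        simp [binomialTail_self]
    _ ≤ (binomialTail ℝ n (m + 1)).eval ((m : ℝ) / n) :=
        monotoneOn_eval_binomialTail_div (by omega) Set.self_mem_Ici hmn hmn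
    _ ≤ (binomialTail ℝ n (m + 1)).eval p :=
        monotoneOn_eval_binomialTail hmn hdiv_mem ⟨hdiv_mem.1.trans hmp, hp1.le⟩ hmp

/-- If `n p ≥ 2` and `n(1-p) ≥ 2`, then `P(X > n p) > 0.25587 > 1/4`. -/
theorem binomial_prob_gt_mean_main_case
    (n : ℕ) (p : ℝ) (hp0 : 0 < p) (hp1 : p < 1)
    (h1 : 2 ≤ (n : ℝ) * p) (h2 : 2 ≤ (n : ℝ) * (1 - p)) :
    (0.25587 : ℝ) <
      (∑ k ∈ (Finset.range (n + 1)).filter (fun k : ℕ => (n : ℝ) * p < (k : ℝ)),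
        (n.choose k : ℝ) * p ^ k * (1 - p) ^ (n - k)) ∧
    (1 : ℝ) / 4 < (0.25587 : ℝ) :=
  binomial_prob_gt_mean_main_case_general n p hp1 h1
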